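/- Let S = k[[x, y, z, w]] and I = (x, y) ∩ (x, w) ∩ (y, z) = (xy, xz, yw). Then for every q = p^e, e ≥ 1, (I^{[q]} :_S I) = (x^q y^q, x^q z^q, y^q w^q, x^q y^{q-1} z^{q-1}, x^{q-1} y^q w^{q-1}, (xyzw)^{q-1}). -/

import Mathlib

open MvPowerSeries

/-- The `q`-th Frobenius power `J^{[q]}` of an ideal `J`: the ideal generated by
the `q`-th powers of the elements of `J`. -/
noncomputable def frobeniusPower {R : Type*} [CommRing R] (J : Ideal R) (q : ℕ) : Ideal R :=
  Ideal.span ((fun f => f ^ q) '' (J : Set R))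

/-- In `S = k[[x,y,z,w]]` (with `x = X 0`, `y = X 1`, `z = X 2`, `w = X 3`),
the ideal `I = (x,y) ∩ (x,w) ∩ (y,z) = (xy, xz, yw)`. -/
noncomputable def exampleIdeal18 (K : Type*) [Field K] : Ideal (MvPowerSeries (Fin 4) K) :=
  Ideal.span {(X 0 : MvPowerSeries (Fin 4) K), X 1} ⊓
    Ideal.span {(X 0 : MvPowerSeries (Fin 4) K), X 3} ⊓
    Ideal.span {(X 1 : MvPowerSeries (Fin 4) K), X 2}

section Monomials

variable {σ : Type*} {R : Type*} [CommRing R]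

open Classical in
/-- A power series all of whose coefficient-supporting exponents dominate `a`
is divisible by the monomial `X^a`. -/
theorem monomial_dvd_of_coeff {a : σ →₀ ℕ} {f : MvPowerSeries σ R}
    (h : ∀ d, coeff (R := R) d f ≠ 0 → a ≤ d) :
    ∃ g : MvPowerSeries σ R, f = monomial (R := R) a 1 * g := by
  refine ⟨fun d => coeff (R := R) (d + a) f, MvPowerSeries.ext fun d => ?_⟩
  erw [coeff_monomial_mul]
  split_ifs with hle
  · rw [one_mul]
    show coeff (R := R) d f = coeff (R := R) (d - a + a) f
    rw [tsub_add_cancel_of_le hle]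
  · by_contra hne
    exact hle (h d hne)

open Classical in
theorem mem_span_monomials (L : List (σ →₀ ℕ)) (f : MvPowerSeries σ R) :
    f ∈ Ideal.span {g : MvPowerSeries σ R | ∃ a ∈ L, g = monomial (R := R) a 1} ↔
      ∀ d, coeff (R := R) d f ≠ 0 → ∃ a ∈ L, a ≤ d := by
  induction L generalizing f with
  | nil =>
    have h1 : {g : MvPowerSeries σ R | ∃ a ∈ ([] : List (σ →₀ ℕ)), g = monomial (R := R) a 1} = ∅ := by
      simp
    rw [h1, Ideal.span_empty, Ideal.mem_bot]
    constructor
    · rintro rfl d h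
      simpa using h (map_zero _)
    · intro h
      ext d
      have := h d
      simp only [List.not_mem_nil, false_and, exists_false, imp_false, not_not] at this
      simpa using this
  | cons a L ih =>
    have hset : {g : MvPowerSeries σ R | ∃ b ∈ (a :: L), g = monomial (R := R) b 1} =
        insert (monomial (R := R) a 1) {g : MvPowerSeries σ R | ∃ b ∈ L, g = monomial (R := R) b 1} := by
      ext g; simp [or_and_right, exists_or, eq_comm]
    rw [hset]
    constructor
    · intro hf d hd
      rcases Ideal.mem_span_insert.mp hf with ⟨c, z, hz, rfl⟩
      rw [map_add] at hd
      rcases (by by_contra hc; push_neg at hc; rw [hc.1, hc.2, add_zero] at hd; exact hd rfl :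
          coeff (R := R) d (c * monomial (R := R) a 1) ≠ 0 ∨ coeff (R := R) d z ≠ 0) with h1 | h2
      · rw [coeff_mul_monomial] at h1
        split_ifs at h1 with hle
        · exact ⟨a, List.mem_cons_self, hle⟩
        · exact absurd rfl h1
      · rcases (ih z).mp hz d h2 with ⟨b, hb, hbd⟩
        exact ⟨b, List.mem_cons_of_mem a hb, hbd⟩
    · intro h
      set f1 : MvPowerSeries σ R := fun d => if a ≤ d then coeff (R := R) d f else 0 with hf1
      set f2 : MvPowerSeries σ R := fun d => if a ≤ d then 0 else coeff (R := R) d f with hf2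
      have hsplit : f = f1 + f2 := by
        ext d
        show coeff (R := R) d f = (if a ≤ d then coeff (R := R) d f else 0) + (if a ≤ d then 0 else coeff (R := R) d f)
        split_ifs <;> simp
      rw [hsplit]
      refine Ideal.add_mem _ ?_ ?_
      · obtain ⟨g, hg⟩ := monomial_dvd_of_coeff (a := a) (f := f1)
          (fun d hd => by by_contra hle; exact hd (if_neg hle))
        rw [hg]
        exact Ideal.mul_mem_right _ _ (Ideal.subset_span (Set.mem_insert _ _))
      · refine Ideal.span_mono (Set.subset_insert _ _) ?_
        rw [ih]
        intro d hd
        have hale : ¬ a ≤ d := by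
          intro hle
          exact hd (if_pos hle)
        have : coeff (R := R) d f2 = coeff (R := R) d f := if_neg hale
        rcases h d (by rw [this] at hd; exact hd) with ⟨b, hb, hbd⟩
        rcases List.mem_cons.mp hb with rfl | hbL
        · exact absurd hbd hale
        · exact ⟨b, hbL, hbd⟩

theorem monomial_pow (a : σ →₀ ℕ) (q : ℕ) :
    (monomial (R := R) a 1) ^ q = monomial (R := R) (q • a) 1 := by
  induction q with
  | zero => simp [MvPowerSeries.monomial_zero_one]
  | succ n ih => rw [pow_succ, ih, monomial_mul_monomial, one_mul, succ_nsmul]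

end Monomials

section Span

theorem frobeniusPower_span {R : Type*} [CommRing R] (p : ℕ) [Fact p.Prime] [CharP R p]
    (e : ℕ) (s : Set R) :
    frobeniusPower (Ideal.span s) (p ^ e) = Ideal.span ((fun f => f ^ p ^ e) '' s) := by
  apply le_antisymm
  · rw [frobeniusPower, Ideal.span_le]
    rintro _ ⟨f, hf, rfl⟩
    have : ∀ f ∈ Ideal.span s, f ^ p ^ e ∈ Ideal.span ((fun f => f ^ p ^ e) '' s) := by
      intro f hf
      induction hf using Submodule.span_induction with
      | mem x hx => exact Ideal.subset_span ⟨x, hx, rfl⟩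
      | zero =>
        rw [zero_pow (pow_ne_zero e (Fact.out : p.Prime).ne_zero)]
        exact Ideal.zero_mem _
      | add x y _ _ hx hy =>
        rw [add_pow_char_pow]
        exact Ideal.add_mem _ hx hy
      | smul r x _ hx =>
        rw [smul_eq_mul, mul_pow]
        exact Ideal.mul_mem_left _ _ hx
    exact this f hf
  · rw [Ideal.span_le]
    rintro _ ⟨f, hf, rfl⟩
    exact Ideal.subset_span ⟨f, Ideal.subset_span hf, rfl⟩

theorem mem_colon_span {R : Type*} [CommRing R] (N : Ideal R) (s : Set R) (f : R) :
    f ∈ Submodule.colon N (Ideal.span s) ↔ ∀ g ∈ s, f * g ∈ N := by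
  rw [Submodule.mem_colon]
  constructor
  · intro h g hg
    exact h g (Ideal.subset_span hg)
  · intro h g hg
    induction hg using Submodule.span_induction with
    | mem x hx => exact h x hx
    | zero => rw [smul_eq_mul, mul_zero]; exact N.zero_mem
    | add x y _ _ hx hy => rw [smul_add]; exact N.add_mem hx hy
    | smul r x _ hx =>
      rw [smul_comm]
      exact N.smul_mem r hx

end Span

section Vec

/-- The exponent vector `(a, b, c, d) : Fin 4 →₀ ℕ`. -/
noncomputable def v4 (a b c d : ℕ) : Fin 4 →₀ ℕ :=
  Finsupp.single 0 a + Finsupp.single 1 b + Finsupp.single 2 c + Finsupp.single 3 d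

lemma v4_apply_0 (a b c d : ℕ) : v4 a b c d 0 = a := by
  simp [v4, Finsupp.single_apply]
lemma v4_apply_1 (a b c d : ℕ) : v4 a b c d 1 = b := by
  simp [v4, Finsupp.single_apply]
lemma v4_apply_2 (a b c d : ℕ) : v4 a b c d 2 = c := by
  simp [v4, Finsupp.single_apply]
lemma v4_apply_3 (a b c d : ℕ) : v4 a b c d 3 = d := by
  simp [v4, Finsupp.single_apply]

lemma v4_le_iff (a b c d : ℕ) (x : Fin 4 →₀ ℕ) :
    v4 a b c d ≤ x ↔ a ≤ x 0 ∧ b ≤ x 1 ∧ c ≤ x 2 ∧ d ≤ x 3 := by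
  rw [Finsupp.le_def]
  constructor
  · intro h
    refine ⟨?_, ?_, ?_, ?_⟩
    · simpa [v4_apply_0] using h 0
    · simpa [v4_apply_1] using h 1
    · simpa [v4_apply_2] using h 2
    · simpa [v4_apply_3] using h 3
  · rintro ⟨h0, h1, h2, h3⟩ i
    fin_cases i <;> simp [v4_apply_0, v4_apply_1, v4_apply_2, v4_apply_3, *]

lemma smul_v4 (q a b c d : ℕ) : q • v4 a b c d = v4 (q * a) (q * b) (q * c) (q * d) := by
  ext i
  fin_cases i <;>
    simp [Finsupp.smul_apply, v4_apply_0, v4_apply_1, v4_apply_2, v4_apply_3]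

lemma add_v4_apply (x : Fin 4 →₀ ℕ) (a b c d : ℕ) (i : Fin 4) :
    (x + v4 a b c d) i = x i + v4 a b c d i := Finsupp.add_apply x _ i

lemma m4 {K : Type*} [Field K] (a b c d : ℕ) :
    (X 0 : MvPowerSeries (Fin 4) K) ^ a * X 1 ^ b * X 2 ^ c * X 3 ^ d =
      monomial (R := K) (v4 a b c d) 1 := by
  rw [X_pow_eq, X_pow_eq, X_pow_eq, X_pow_eq, monomial_mul_monomial, monomial_mul_monomial,
    monomial_mul_monomial, v4]
  norm_num

end Vec

theorem mul_monomial_mem_span {σ R : Type*} [CommRing R] (L : List (σ →₀ ℕ))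
    (f : MvPowerSeries σ R) (b : σ →₀ ℕ) :
    f * monomial (R := R) b 1 ∈ Ideal.span {g : MvPowerSeries σ R | ∃ a ∈ L, g = monomial (R := R) a 1} ↔
      ∀ d, coeff (R := R) d f ≠ 0 → ∃ a ∈ L, a ≤ d + b := by
  rw [mem_span_monomials]
  constructor
  · intro h d hd
    exact h (d + b) (by rw [coeff_add_mul_monomial]; simpa)
  · intro h d hd
    rw [coeff_mul_monomial] at hd
    split_ifs at hd with hbd
    · rcases h (d - b) (by simpa using hd) with ⟨a, ha, hle⟩
      refine ⟨a, ha, hle.trans ?_⟩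
      rw [tsub_add_cancel_of_le hbd]
    · exact absurd rfl hd

theorem colon_frobeniusPower_example18 {K : Type*} [Field K] (p : ℕ)
    [Fact p.Prime] [CharP K p] (e : ℕ) (he : 1 ≤ e) :
    Submodule.colon (frobeniusPower (exampleIdeal18 K) (p ^ e)) (exampleIdeal18 K) =
      Ideal.span {(X 0 : MvPowerSeries (Fin 4) K) ^ p ^ e * X 1 ^ p ^ e,
        (X 0 : MvPowerSeries (Fin 4) K) ^ p ^ e * X 2 ^ p ^ e,
        (X 1 : MvPowerSeries (Fin 4) K) ^ p ^ e * X 3 ^ p ^ e,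
        (X 0 : MvPowerSeries (Fin 4) K) ^ p ^ e * X 1 ^ (p ^ e - 1) * X 2 ^ (p ^ e - 1),
        (X 0 : MvPowerSeries (Fin 4) K) ^ (p ^ e - 1) * X 1 ^ p ^ e * X 3 ^ (p ^ e - 1),
        ((X 0 : MvPowerSeries (Fin 4) K) * X 1 * X 2 * X 3) ^ (p ^ e - 1)} := by
  haveI : CharP (MvPowerSeries (Fin 4) K) p :=
    charP_of_injective_ringHom (f := C (σ := Fin 4) (R := K))
      (fun a b h => by simpa using congrArg (constantCoeff (σ := Fin 4) (R := K)) h) p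
  set q := p ^ e with hqdef
  have hq : 1 ≤ q := Nat.one_le_pow _ _ (Fact.out : p.Prime).pos
  -- basic monomial identities
  have hx : (X 0 : MvPowerSeries (Fin 4) K) = monomial (R := K) (v4 1 0 0 0) 1 := by
    simpa using m4 (K := K) 1 0 0 0
  have hy : (X 1 : MvPowerSeries (Fin 4) K) = monomial (R := K) (v4 0 1 0 0) 1 := by
    simpa using m4 (K := K) 0 1 0 0
  have hz : (X 2 : MvPowerSeries (Fin 4) K) = monomial (R := K) (v4 0 0 1 0) 1 := by
    simpa using m4 (K := K) 0 0 1 0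
  have hw : (X 3 : MvPowerSeries (Fin 4) K) = monomial (R := K) (v4 0 0 0 1) 1 := by
    simpa using m4 (K := K) 0 0 0 1
  -- Step 1 : I = (xy, xz, yw) as a monomial ideal
  have hI : exampleIdeal18 K = Ideal.span {g : MvPowerSeries (Fin 4) K |
      ∃ a ∈ [v4 1 1 0 0, v4 1 0 1 0, v4 0 1 0 1], g = monomial (R := K) a 1} := by
    have e01 : ({(X 0 : MvPowerSeries (Fin 4) K), X 1} : Set (MvPowerSeries (Fin 4) K)) =
        {g | ∃ a ∈ [v4 1 0 0 0, v4 0 1 0 0], g = monomial (R := K) a 1} := by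
      rw [hx, hy]; ext g; simp
    have e03 : ({(X 0 : MvPowerSeries (Fin 4) K), X 3} : Set (MvPowerSeries (Fin 4) K)) =
        {g | ∃ a ∈ [v4 1 0 0 0, v4 0 0 0 1], g = monomial (R := K) a 1} := by
      rw [hx, hw]; ext g; simp
    have e12 : ({(X 1 : MvPowerSeries (Fin 4) K), X 2} : Set (MvPowerSeries (Fin 4) K)) =
        {g | ∃ a ∈ [v4 0 1 0 0, v4 0 0 1 0], g = monomial (R := K) a 1} := by
      rw [hy, hz]; ext g; simp
    ext f
    rw [exampleIdeal18, e01, e03, e12, Submodule.mem_inf, Submodule.mem_inf,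
      mem_span_monomials, mem_span_monomials, mem_span_monomials, mem_span_monomials]
    constructor
    · rintro ⟨⟨h1, h2⟩, h3⟩ d hd
      specialize h1 d hd; specialize h2 d hd; specialize h3 d hd
      simp only [List.mem_cons, List.not_mem_nil, or_false, exists_eq_or_imp, exists_eq_left,
        v4_le_iff] at h1 h2 h3 ⊢
      omega
    · intro h
      refine ⟨⟨?_, ?_⟩, ?_⟩ <;> intro d hd <;> (
        specialize h d hd
        simp only [List.mem_cons, List.not_mem_nil, or_false, exists_eq_or_imp, exists_eq_left,
          v4_le_iff] at h ⊢
        omega)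
  -- Step 2 : I as a span of a three-element set
  have hlist3 : {g : MvPowerSeries (Fin 4) K |
        ∃ a ∈ [v4 1 1 0 0, v4 1 0 1 0, v4 0 1 0 1], g = monomial (R := K) a 1} =
      ({monomial (R := K) (v4 1 1 0 0) 1, monomial (R := K) (v4 1 0 1 0) 1, monomial (R := K) (v4 0 1 0 1) 1} :
        Set (MvPowerSeries (Fin 4) K)) := by
    ext g; simp
  have hs3 : exampleIdeal18 K = Ideal.span
      ({monomial (R := K) (v4 1 1 0 0) 1, monomial (R := K) (v4 1 0 1 0) 1, monomial (R := K) (v4 0 1 0 1) 1} :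
        Set (MvPowerSeries (Fin 4) K)) := by
    rw [hI, hlist3]
  -- Step 3 : the Frobenius power as a monomial ideal
  have hFrob : frobeniusPower (exampleIdeal18 K) q = Ideal.span {g : MvPowerSeries (Fin 4) K |
      ∃ a ∈ [v4 q q 0 0, v4 q 0 q 0, v4 0 q 0 q], g = monomial (R := K) a 1} := by
    rw [hs3, hqdef, frobeniusPower_span p e]
    congr 1
    rw [Set.image_insert_eq, Set.image_insert_eq, Set.image_singleton]
    simp only [_root_.monomial_pow, smul_v4, mul_one, mul_zero]
    ext g; simp
  -- Step 4 : rewrite the answer ideal as a monomial ideal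
  have hg1 : (X 0 : MvPowerSeries (Fin 4) K) ^ q * X 1 ^ q = monomial (R := K) (v4 q q 0 0) 1 := by
    simpa using m4 (K := K) q q 0 0
  have hg2 : (X 0 : MvPowerSeries (Fin 4) K) ^ q * X 2 ^ q = monomial (R := K) (v4 q 0 q 0) 1 := by
    simpa using m4 (K := K) q 0 q 0
  have hg3 : (X 1 : MvPowerSeries (Fin 4) K) ^ q * X 3 ^ q = monomial (R := K) (v4 0 q 0 q) 1 := by
    simpa using m4 (K := K) 0 q 0 q
  have hg4 : (X 0 : MvPowerSeries (Fin 4) K) ^ q * X 1 ^ (q - 1) * X 2 ^ (q - 1) =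
      monomial (R := K) (v4 q (q - 1) (q - 1) 0) 1 := by
    simpa using m4 (K := K) q (q - 1) (q - 1) 0
  have hg5 : (X 0 : MvPowerSeries (Fin 4) K) ^ (q - 1) * X 1 ^ q * X 3 ^ (q - 1) =
      monomial (R := K) (v4 (q - 1) q 0 (q - 1)) 1 := by
    have := m4 (K := K) (q - 1) q 0 (q - 1)
    rw [pow_zero, mul_one] at this
    exact this
  have hg6 : ((X 0 : MvPowerSeries (Fin 4) K) * X 1 * X 2 * X 3) ^ (q - 1) =
      monomial (R := K) (v4 (q - 1) (q - 1) (q - 1) (q - 1)) 1 := by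
    rw [mul_pow, mul_pow, mul_pow]
    exact m4 (K := K) (q - 1) (q - 1) (q - 1) (q - 1)
  -- main computation
  ext f
  rw [hg1, hg2, hg3, hg4, hg5, hg6]
  have hset6 : ({monomial (R := K) (v4 q q 0 0) 1, monomial (R := K) (v4 q 0 q 0) 1,
        monomial (R := K) (v4 0 q 0 q) 1, monomial (R := K) (v4 q (q - 1) (q - 1) 0) 1,
        monomial (R := K) (v4 (q - 1) q 0 (q - 1)) 1,
        monomial (R := K) (v4 (q - 1) (q - 1) (q - 1) (q - 1)) 1} :
        Set (MvPowerSeries (Fin 4) K)) =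
      {g : MvPowerSeries (Fin 4) K | ∃ a ∈ [v4 q q 0 0, v4 q 0 q 0, v4 0 q 0 q,
        v4 q (q - 1) (q - 1) 0, v4 (q - 1) q 0 (q - 1),
        v4 (q - 1) (q - 1) (q - 1) (q - 1)], g = monomial (R := K) a 1} := by
    ext g; simp
  rw [hset6, mem_span_monomials]
  rw [hFrob]
  conv_lhs => rw [hs3]
  rw [mem_colon_span]
  simp only [Set.mem_insert_iff, Set.mem_singleton_iff, forall_eq_or_imp, forall_eq]
  rw [mul_monomial_mem_span, mul_monomial_mem_span, mul_monomial_mem_span]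
  constructor
  · rintro ⟨h1, h2, h3⟩ d hd
    specialize h1 d hd; specialize h2 d hd; specialize h3 d hd
    simp only [List.mem_cons, List.not_mem_nil, or_false, exists_eq_or_imp, exists_eq_left,
      v4_le_iff, Finsupp.add_apply, v4_apply_0, v4_apply_1, v4_apply_2, v4_apply_3]
      at h1 h2 h3 ⊢
    omega
  · intro h
    refine ⟨?_, ?_, ?_⟩ <;> intro d hd <;> (
      specialize h d hd
      simp only [List.mem_cons, List.not_mem_nil, or_false, exists_eq_or_imp, exists_eq_left,
        v4_le_iff, Finsupp.add_apply, v4_apply_0, v4_apply_1, v4_apply_2, v4_apply_3] at h ⊢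
      omega)
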